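/- Let p be a prime, e ≥ 1, and A, B ∈ R = ℤ/p^eℤ. If X, Z ∈ R satisfy p ∣ X, p ∣ Z and Z = X³ + A·X·Z² + B·Z³, then there exists a unit u ∈ Rˣ with Z = u · X³. In particular, if p^t ∣ X then p^(3t) ∣ Z. -/
import Mathlib

/-- For a point at infinity `(X : 1 : Z)` of the Weierstrass curve over `ℤ/p^eℤ`, the
`Z`-coordinate is a unit multiple of `X³`; in particular `p^t ∣ X` implies `p^(3t) ∣ Z`. -/
theorem infinity_Z_unit_mul_X_cubed
    {p : ℕ} (hp : p.Prime) {e : ℕ} (he : 1 ≤ e)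
    (A B X Z : ZMod (p ^ e))
    (hX : (p : ZMod (p ^ e)) ∣ X) (hZ : (p : ZMod (p ^ e)) ∣ Z)
    (heq : Z = X ^ 3 + A * X * Z ^ 2 + B * Z ^ 3) :
    (∃ u : (ZMod (p ^ e))ˣ, Z = (u : ZMod (p ^ e)) * X ^ 3) ∧
      ∀ t : ℕ, (p : ZMod (p ^ e)) ^ t ∣ X → (p : ZMod (p ^ e)) ^ (3 * t) ∣ Z := by
  have hpnil : IsNilpotent ((p : ZMod (p ^ e))) := by
    refine ⟨e, ?_⟩
    rw [← Nat.cast_pow]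
    exact ZMod.natCast_self _
  have hw : IsNilpotent (A * X * Z + B * Z ^ 2) := by
    obtain ⟨x, hx⟩ := hX
    obtain ⟨z, hz⟩ := hZ
    obtain ⟨n, hn⟩ := hpnil
    refine ⟨n, ?_⟩
    have : A * X * Z + B * Z ^ 2
        = (p : ZMod (p ^ e)) * (A * x * ((p:ZMod (p^e)) * z) + B * (p:ZMod (p^e)) * z ^ 2) := by
      rw [hx, hz]; ring
    rw [this, mul_pow, hn, zero_mul]
  have hu : IsUnit (1 - (A * X * Z + B * Z ^ 2)) := hw.isUnit_one_sub
  obtain ⟨v, hv⟩ := hu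
  have hkey : Z * (v : ZMod (p ^ e)) = X ^ 3 := by
    rw [hv]; linear_combination heq
  have hZeq : Z = ((v⁻¹ : (ZMod (p ^ e))ˣ) : ZMod (p ^ e)) * X ^ 3 := by
    calc Z = Z * ((v : ZMod (p ^ e)) * ((v⁻¹ : (ZMod (p ^ e))ˣ) : ZMod (p ^ e))) := by
              rw [Units.mul_inv, mul_one]
      _ = X ^ 3 * ((v⁻¹ : (ZMod (p ^ e))ˣ) : ZMod (p ^ e)) := by rw [← mul_assoc, hkey]
      _ = _ := by ring
  refine ⟨⟨v⁻¹, hZeq⟩, fun t ht => ?_⟩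
  obtain ⟨c, hc⟩ := ht
  refine ⟨((v⁻¹ : (ZMod (p ^ e))ˣ) : ZMod (p ^ e)) * c ^ 3, ?_⟩
  rw [hZeq, hc]; ring
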